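/- For all 0 ≤ S ≤ T and all x, y ∈ I one has 0 ≤ Ū^{N,0}_{S,T,x,y}, and sup_{x,y∈I} Ū^{N,0}_{S,T,x,y} ≤ C·(N^{−1} + N^{−1}(T−S)^{−1/2}) for a constant C depending only on ᾱ (hence only on m, c, C₀). -/

import Mathlib

open scoped BigOperators

/-- Nearest-neighbor Neumann generator `ℒ̄` with diffusivity `a`, acting on `ℤ`-indexed
functions, on the interval `I = {0,…,N}`. -/
noncomputable def LbarAct (N : ℕ) (a : ℝ) (φ : ℤ → ℝ) (x : ℤ) : ℝ :=
  if x = 0 then a * (N : ℝ) ^ 2 / 2 * (φ 1 - φ 0)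
  else if x = (N : ℤ) then a * (N : ℝ) ^ 2 / 2 * (φ ((N : ℤ) - 1) - φ (N : ℤ))
  else a * (N : ℝ) ^ 2 / 2 * (φ (x + 1) + φ (x - 1) - 2 * φ x)

/-- Matrix of `ℒ̄` on `I = {0,…,N}`. -/
noncomputable def LbarMat (N : ℕ) (a : ℝ) : Matrix (Fin (N + 1)) (Fin (N + 1)) ℝ :=
  Matrix.of fun x y =>
    LbarAct N a (fun z => if z = ((y : ℕ) : ℤ) then 1 else 0) ((x : ℕ) : ℤ)

/-- Nearest-neighbor Neumann heat kernel `Ū^{N,0}_{S,T,x,y} = (exp((T−S)ℒ̄))_{x,y}`,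
indexed by integers (zero off `I × I`). -/
noncomputable def kerBar0 (N : ℕ) (a : ℝ) (S T : ℝ) (x y : ℤ) : ℝ :=
  if hxy : 0 ≤ x ∧ x ≤ (N : ℤ) ∧ 0 ≤ y ∧ y ≤ (N : ℤ) then
    NormedSpace.exp ((T - S) • LbarMat N a) ⟨x.toNat, by omega⟩ ⟨y.toNat, by omega⟩
  else 0

/-!
The Neumann generator is diagonalised by the cosine modes `x ↦ cos ((x + 1/2) jπ/(N+1))`:
extended to `ℤ`, such a mode is even about `-1/2` and about `N + 1/2`, so the boundary rows of `ℒ̄`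
act on it like interior rows, and its eigenvalue `-ᾱN²(1 - cos (jπ/(N+1)))` is at most `-ᾱj²/2`.
The normalised modes are bounded by `√(2/(N+1))`, so every kernel entry is at most
`2/(N+1) · ∑ⱼ exp (-ᾱtj²/2)`, a Gaussian sum of size `O(1 + (ᾱt)^(-1/2))`; with `ᾱ ≥ c` this is
the bound. Nonnegativity holds because `ℒ̄` has nonnegative off-diagonal entries, so `exp (tℒ̄)`
is a positive multiple of the exponential of an entrywise nonnegative matrix.
-/

open Real Finset Matrix

theorem two_mul_sin_half_mul_sum_range_cos (n : ℕ) (θ : ℝ) :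
    2 * sin (θ / 2) * ∑ x ∈ range n, cos ((x + 1 / 2) * θ) = sin (n * θ) := by
  induction n with
  | zero => simp
  | succ k ih =>
    rw [sum_range_succ, mul_add, ih]
    have h₁ : ((k + 1 : ℕ) : ℝ) * θ = (k + 1 / 2) * θ + θ / 2 := by push_cast; ring
    have h₂ : (k : ℝ) * θ = (k + 1 / 2) * θ - θ / 2 := by ring
    rw [h₁, h₂, sin_add, sin_sub]
    ring

theorem sum_range_cos_half_mul_int_mul_pi_div {n : ℕ} {m : ℤ} (hm : m ≠ 0) (hmn : |m| < 2 * n) :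
    ∑ x ∈ range n, cos ((x + 1 / 2) * (m * π / n)) = 0 := by
  have hn : (0 : ℝ) < n := by
    have : (0 : ℤ) < n := by linarith [abs_nonneg m]
    exact_mod_cast this
  have hmn' : |(m : ℝ)| < 2 * n := by exact_mod_cast hmn
  have hθ : |m * π / n / 2| < π := by
    rw [abs_div, abs_div, abs_mul, abs_of_pos pi_pos, abs_of_pos hn, abs_two,
      div_div, div_lt_iff₀ (by positivity)]
    nlinarith [pi_pos]
  have hsin : sin (m * π / n / 2) ≠ 0 := by
    rw [Ne, sin_eq_zero_iff_of_lt_of_lt (abs_lt.1 hθ).1 (abs_lt.1 hθ).2]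
    have : (m : ℝ) ≠ 0 := by exact_mod_cast hm
    positivity
  have h := two_mul_sin_half_mul_sum_range_cos n (m * π / n)
  rw [show (n : ℝ) * (m * π / n) = m * π by field_simp, sin_int_mul_pi] at h
  exact (mul_eq_zero.1 h).resolve_left (mul_ne_zero two_ne_zero hsin)

theorem sum_range_cos_mul_cos {n j k : ℕ} (hj : j < n) (hk : k < n) :
    ∑ x ∈ range n, cos ((x + 1 / 2) * (j * π / n)) * cos ((x + 1 / 2) * (k * π / n)) =
      if j = k then (if j = 0 then (n : ℝ) else n / 2) else 0 := by
  have hsplit : ∀ x : ℕ, cos ((x + 1 / 2) * (j * π / n)) * cos ((x + 1 / 2) * (k * π / n)) =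
      (cos ((x + 1 / 2) * (((j + k : ℤ) : ℝ) * π / n)) +
        cos ((x + 1 / 2) * (((j - k : ℤ) : ℝ) * π / n))) / 2 := by
    intro x
    push_cast
    rw [show (x + 1 / 2) * ((j + k) * π / n) = (x + 1 / 2) * (j * π / n) + (x + 1 / 2) * (k * π / n)
        by ring, show (x + 1 / 2) * ((j - k) * π / n) =
          (x + 1 / 2) * (j * π / n) - (x + 1 / 2) * (k * π / n) by ring, cos_add, cos_sub]
    ring
  simp only [hsplit, ← sum_div, sum_add_distrib]
  by_cases hjk : j = k
  · subst hjk
    by_cases hj0 : j = 0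
    · subst hj0; simp
    · rw [sum_range_cos_half_mul_int_mul_pi_div (by omega) (by rw [abs_lt]; omega)]
      simp [hj0]
  · rw [sum_range_cos_half_mul_int_mul_pi_div (by omega) (by rw [abs_lt]; omega),
      sum_range_cos_half_mul_int_mul_pi_div (by omega) (by rw [abs_lt]; omega)]
    simp [hjk]

theorem Matrix.exp_apply_eq_sum_of_mul_eq_mul_diagonal {n : Type*} [Fintype n] [DecidableEq n]
    {A P : Matrix n n ℝ} {d : n → ℝ} (hP : Pᵀ * P = 1) (hAP : A * P = P * diagonal d) (i j : n) :
    NormedSpace.exp A i j = ∑ k, Real.exp (d k) * (P i k * P j k) := by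
  have hinv : P⁻¹ = Pᵀ := inv_eq_left_inv hP
  have hA : A = P * diagonal d * P⁻¹ := by
    rw [← hAP, hinv, Matrix.mul_assoc, mul_eq_one_comm.mp hP, Matrix.mul_one]
  rw [hA, exp_conj _ _ ((isUnit_iff_isUnit_det P).2 (isUnit_det_of_left_inverse hP)),
    exp_diagonal, hinv, mul_apply]
  simp [mul_diagonal, Real.exp_eq_exp_ℝ, mul_comm, mul_left_comm, mul_assoc]

theorem Matrix.exp_apply_nonneg {n : Type*} [Fintype n] [DecidableEq n] {A : Matrix n n ℝ}
    (hA : ∀ i j, 0 ≤ A i j) (i j : n) : 0 ≤ NormedSpace.exp A i j := by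
  rw [NormedSpace.exp_eq_tsum ℝ]
  beta_reduce
  by_cases hs : Summable fun k : ℕ => (k.factorial⁻¹ : ℝ) • A ^ k
  · exact (Pi.hasSum.1 (Pi.hasSum.1 hs.hasSum i) j).nonneg fun k =>
      mul_nonneg (by positivity) (pow_apply_nonneg hA k i j)
  · rw [tsum_eq_zero_of_not_summable hs]; rfl

theorem Matrix.exp_apply_nonneg_of_offDiag_nonneg {n : Type*} [Fintype n] [DecidableEq n]
    {A : Matrix n n ℝ} (hA : ∀ i j, i ≠ j → 0 ≤ A i j) (i j : n) : 0 ≤ NormedSpace.exp A i j := by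
  set μ := ∑ i, |A i i|
  have hshift : ∀ i j, 0 ≤ (A + μ • 1) i j := fun i j => by
    rcases eq_or_ne i j with rfl | hij
    · have : |A i i| ≤ μ := single_le_sum (f := fun i => |A i i|) (fun _ _ => abs_nonneg _)
        (mem_univ i)
      simp only [add_apply, smul_apply, one_apply_eq, smul_eq_mul, mul_one]
      linarith [neg_abs_le (A i i)]
    · simp [hij, hA i j hij]
  have hsplit : A = (-μ) • (1 : Matrix n n ℝ) + (A + μ • 1) := by module
  rw [hsplit, exp_add_of_commute _ _ ((Commute.one_left _).smul_left _), smul_one_eq_diagonal,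
    exp_diagonal, diagonal_mul]
  exact mul_nonneg (by simp [← Real.exp_eq_exp_ℝ]; positivity) (exp_apply_nonneg hshift i j)

theorem sum_fin_ite_intCast_eq_mul {N : ℕ} (φ : ℤ → ℝ) {p : ℤ} (h₀ : 0 ≤ p) (hN : p ≤ N) :
    ∑ y : Fin (N + 1), (if p = ((y : ℕ) : ℤ) then (1 : ℝ) else 0) * φ y = φ p := by
  rw [Fintype.sum_eq_single ⟨p.toNat, by omega⟩]
  · simp [Int.toNat_of_nonneg h₀]
  · intro y hy
    rw [if_neg, zero_mul]
    rintro rfl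
    exact hy (Fin.ext (by simp))

theorem LbarMat_mulVec (N : ℕ) (a : ℝ) (φ : ℤ → ℝ) (x : Fin (N + 1)) :
    (LbarMat N a *ᵥ fun y => φ y) x = LbarAct N a φ x := by
  obtain rfl | hN := N.eq_zero_or_pos
  · simp [mulVec, dotProduct, LbarMat, LbarAct]
  have hδ := fun p h₀ hp => sum_fin_ite_intCast_eq_mul (N := N) φ (p := p) h₀ hp
  simp only [mulVec, dotProduct, LbarMat, of_apply, LbarAct]
  split_ifs with h₀ h₁
  · simp only [mul_sub, sub_mul, mul_assoc, sum_sub_distrib, ← mul_sum,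
      hδ 1 (by omega) (by omega), hδ 0 le_rfl (by omega)]
  · simp only [mul_sub, sub_mul, mul_assoc, sum_sub_distrib, ← mul_sum,
      hδ (N - 1) (by omega) (by omega), hδ N (by omega) le_rfl]
  · simp only [mul_sub, sub_mul, mul_add, add_mul, mul_assoc, sum_sub_distrib, sum_add_distrib,
      ← mul_sum, hδ (x + 1) (by omega) (by omega), hδ (x - 1) (by omega) (by omega),
      hδ x (by omega) (by omega)]

theorem LbarAct_eq_of_reflection {N : ℕ} {φ : ℤ → ℝ} (h₀ : φ (-1) = φ 0) (hN : φ (N + 1) = φ N)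
    (a : ℝ) (x : ℤ) :
    LbarAct N a φ x = a * N ^ 2 / 2 * (φ (x + 1) + φ (x - 1) - 2 * φ x) := by
  unfold LbarAct
  split_ifs with hx₀ hxN
  · subst hx₀; rw [zero_add, zero_sub, h₀]; ring
  · subst hxN; rw [hN]; ring
  · rfl

noncomputable def neumannFreq (N j : ℕ) : ℝ := j * π / (N + 1)

noncomputable def neumannMode (N j : ℕ) (z : ℤ) : ℝ :=
  √((if j = 0 then 1 else 2) / (N + 1)) * cos ((z + 1 / 2) * neumannFreq N j)

noncomputable def neumannModes (N : ℕ) : Matrix (Fin (N + 1)) (Fin (N + 1)) ℝ :=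
  of fun x j => neumannMode N j x

noncomputable def neumannEigenvalue (N : ℕ) (a : ℝ) (j : ℕ) : ℝ :=
  -(a * N ^ 2) * (1 - cos (neumannFreq N j))

theorem neumannMode_neg_one (N j : ℕ) : neumannMode N j (-1) = neumannMode N j 0 := by
  rw [neumannMode, neumannMode, ← cos_neg]
  congr 2
  push_cast
  ring

theorem neumannMode_natCast_add_one (N j : ℕ) :
    neumannMode N j (N + 1) = neumannMode N j N := by
  have hθ : (N + 1 : ℝ) * neumannFreq N j = j * π := by
    unfold neumannFreq; field_simp
  have h₁ : ((N + 1 : ℤ) + 1 / 2 : ℝ) * neumannFreq N j = j * π + neumannFreq N j / 2 := by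
    push_cast; linear_combination hθ
  have h₂ : ((N : ℤ) + 1 / 2 : ℝ) * neumannFreq N j = j * π - neumannFreq N j / 2 := by
    push_cast; linear_combination hθ
  rw [neumannMode, neumannMode, h₁, h₂, cos_add, cos_sub, sin_nat_mul_pi]
  ring

theorem neumannMode_add_one_add_neumannMode_sub_one (N j : ℕ) (z : ℤ) :
    neumannMode N j (z + 1) + neumannMode N j (z - 1) =
      2 * cos (neumannFreq N j) * neumannMode N j z := by
  simp only [neumannMode]
  push_cast
  rw [show (z + 1 + 1 / 2 : ℝ) * neumannFreq N j =
      (z + 1 / 2) * neumannFreq N j + neumannFreq N j by ring,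
    show (z - 1 + 1 / 2 : ℝ) * neumannFreq N j =
      (z + 1 / 2) * neumannFreq N j - neumannFreq N j by ring, cos_add, cos_sub]
  ring

theorem LbarMat_mul_neumannModes (N : ℕ) (a : ℝ) :
    LbarMat N a * neumannModes N =
      neumannModes N * diagonal fun j : Fin (N + 1) => neumannEigenvalue N a j := by
  ext x j
  have h := LbarMat_mulVec N a (neumannMode N j) x
  rw [LbarAct_eq_of_reflection (neumannMode_neg_one N j) (neumannMode_natCast_add_one N j),
    neumannMode_add_one_add_neumannMode_sub_one] at h
  rw [mul_diagonal, mul_apply]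
  simp only [mulVec, dotProduct] at h
  simp only [neumannModes, of_apply, h, neumannEigenvalue]
  ring

theorem neumannModes_transpose_mul_self (N : ℕ) : (neumannModes N)ᵀ * neumannModes N = 1 := by
  ext j k
  have horth := sum_range_cos_mul_cos (n := N + 1) j.isLt k.isLt
  push_cast at horth
  rw [← Fin.sum_univ_eq_sum_range (fun x =>
    cos ((x + 1 / 2) * (j * π / (N + 1))) * cos ((x + 1 / 2) * (k * π / (N + 1))))] at horth
  rw [mul_apply, one_apply]
  simp only [transpose_apply, neumannModes, of_apply, neumannMode, neumannFreq, Int.cast_natCast]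
  simp_rw [mul_mul_mul_comm _ (cos _), ← mul_sum, horth, Fin.val_inj]
  by_cases hjk : j = k
  · subst hjk
    rw [if_pos rfl, if_pos rfl, mul_self_sqrt (by positivity)]
    split_ifs <;> field_simp
  · rw [if_neg hjk, if_neg hjk, mul_zero]

theorem exp_smul_LbarMat_apply (N : ℕ) (a t : ℝ) (x y : Fin (N + 1)) :
    NormedSpace.exp (t • LbarMat N a) x y =
      ∑ k : Fin (N + 1),
        Real.exp (t * neumannEigenvalue N a k) * (neumannModes N x k * neumannModes N y k) := by
  refine exp_apply_eq_sum_of_mul_eq_mul_diagonal (neumannModes_transpose_mul_self N) ?_ x y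
  rw [smul_mul, LbarMat_mul_neumannModes, ← Matrix.mul_smul, ← diagonal_smul]
  rfl

theorem neumannEigenvalue_le {N : ℕ} (hN : 1 ≤ N) {a : ℝ} (ha : 0 ≤ a) {j : ℕ} (hj : j ≤ N + 1) :
    neumannEigenvalue N a j ≤ -(a / 2 * j ^ 2) := by
  have hN' : (1 : ℝ) ≤ N := by exact_mod_cast hN
  have hj' : (j : ℝ) ≤ N + 1 := by exact_mod_cast hj
  have hθ : |neumannFreq N j| ≤ π := by
    rw [neumannFreq, abs_of_nonneg (by positivity), div_le_iff₀ (by positivity)]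
    nlinarith [pi_pos]
  have hcos : 2 * j ^ 2 / (N + 1) ^ 2 ≤ 1 - cos (neumannFreq N j) := by
    have := cos_le_one_sub_mul_cos_sq hθ
    rw [neumannFreq] at this ⊢
    field_simp at this ⊢
    linarith
  calc neumannEigenvalue N a j ≤ -(a * N ^ 2) * (2 * j ^ 2 / (N + 1) ^ 2) :=
        mul_le_mul_of_nonpos_left hcos (by nlinarith)
    _ ≤ -(a / 2 * j ^ 2) := by
        rw [neg_mul, neg_le_neg_iff, mul_div_assoc', le_div_iff₀ (by positivity)]
        have : (N + 1 : ℝ) ^ 2 ≤ 4 * N ^ 2 := by nlinarith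
        have : 0 ≤ a * j ^ 2 := by positivity
        nlinarith

theorem neumannMode_mul_neumannMode_le (N j : ℕ) (x y : ℤ) :
    neumannMode N j x * neumannMode N j y ≤ 2 / (N + 1) := by
  have hbound : ∀ z, |neumannMode N j z| ≤ √(2 / (N + 1)) := fun z => by
    rw [neumannMode, abs_mul, abs_of_nonneg (sqrt_nonneg _)]
    refine (mul_le_of_le_one_right (sqrt_nonneg _) (abs_cos_le_one _)).trans (sqrt_le_sqrt ?_)
    gcongr
    split_ifs <;> norm_num
  calc neumannMode N j x * neumannMode N j y ≤ |neumannMode N j x| * |neumannMode N j y| := by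
        rw [← abs_mul]; exact le_abs_self _
    _ ≤ √(2 / (N + 1)) * √(2 / (N + 1)) :=
        mul_le_mul (hbound x) (hbound y) (abs_nonneg _) (sqrt_nonneg _)
    _ = 2 / (N + 1) := mul_self_sqrt (by positivity)

theorem sum_range_exp_neg_sq_le {s : ℝ} (hs : 0 < s) (n : ℕ) :
    ∑ k ∈ range n, Real.exp (-(s * k) ^ 2) ≤ Real.exp 1 * (1 + 1 / (2 * s)) := by
  set q := Real.exp (-(2 * s)) with hq
  have hq₀ : 0 ≤ q := (Real.exp_pos _).le
  have hq₁ : q < 1 := Real.exp_lt_one_iff.2 (by linarith)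
  have hterm : ∀ k : ℕ, Real.exp (-(s * k) ^ 2) ≤ Real.exp 1 * q ^ k := fun k => by
    rw [← Real.exp_nat_mul, ← Real.exp_add]
    exact Real.exp_le_exp.2 (by nlinarith [sq_nonneg (s * k - 1)])
  have hgeom : ∑ k ∈ range n, q ^ k ≤ 1 + 1 / (2 * s) := by
    have hsum := geom_sum_Ico_le_of_lt_one (m := 0) (n := n) hq₀ hq₁
    rw [pow_zero, ← range_eq_Ico] at hsum
    refine hsum.trans ?_
    have hexp : q * (1 + 2 * s) ≤ 1 := by
      rw [hq, Real.exp_neg, inv_mul_le_iff₀ (Real.exp_pos _), mul_one]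
      linarith [Real.add_one_le_exp (2 * s)]
    rw [div_le_iff₀ (by linarith)]
    field_simp
    nlinarith
  calc ∑ k ∈ range n, Real.exp (-(s * k) ^ 2) ≤ ∑ k ∈ range n, Real.exp 1 * q ^ k :=
        sum_le_sum fun k _ => hterm k
    _ ≤ Real.exp 1 * (1 + 1 / (2 * s)) := by
        rw [← mul_sum]; exact mul_le_mul_of_nonneg_left hgeom (Real.exp_pos 1).le

theorem exp_smul_LbarMat_apply_le {N : ℕ} (hN : 1 ≤ N) {a t : ℝ} (ha : 0 < a) (ht : 0 < t)
    (x y : Fin (N + 1)) :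
    NormedSpace.exp (t • LbarMat N a) x y ≤
      2 / (N + 1) * (Real.exp 1 * (1 + 1 / (2 * √(a * t / 2)))) := by
  set s := √(a * t / 2) with hs
  have hs₀ : 0 < s := sqrt_pos.2 (by positivity)
  have hdecay : ∀ k : Fin (N + 1), t * neumannEigenvalue N a k ≤ -(s * k) ^ 2 := fun k => by
    have := neumannEigenvalue_le hN ha.le k.isLt.le
    rw [mul_pow, hs, sq_sqrt (by positivity)]
    nlinarith
  rw [exp_smul_LbarMat_apply]
  calc ∑ k : Fin (N + 1),
        Real.exp (t * neumannEigenvalue N a k) * (neumannModes N x k * neumannModes N y k)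
      ≤ ∑ k : Fin (N + 1), Real.exp (-(s * k) ^ 2) * (2 / (N + 1)) :=
        sum_le_sum fun k _ =>
          (mul_le_mul_of_nonneg_left (neumannMode_mul_neumannMode_le N k x y)
            (Real.exp_pos _).le).trans
          (mul_le_mul_of_nonneg_right (Real.exp_le_exp.2 (hdecay k)) (by positivity))
    _ = 2 / (N + 1) * ∑ k ∈ range (N + 1), Real.exp (-(s * k) ^ 2) := by
        rw [← sum_mul, Fin.sum_univ_eq_sum_range (fun k => Real.exp (-(s * k) ^ 2)), mul_comm]
    _ ≤ _ := mul_le_mul_of_nonneg_left (sum_range_exp_neg_sq_le hs₀ _) (by positivity)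

theorem exp_smul_LbarMat_apply_le_of_le {N : ℕ} (hN : 1 ≤ N) {a c t : ℝ} (hc : 0 < c)
    (hca : c ≤ a) (ht : 0 < t) (x y : Fin (N + 1)) :
    NormedSpace.exp (t • LbarMat N a) x y ≤
      2 * Real.exp 1 * (1 + (√(2 * c))⁻¹) * ((N : ℝ)⁻¹ + (N : ℝ)⁻¹ * t ^ (-(1 / 2 : ℝ))) := by
  have hrpow : t ^ (-(1 / 2 : ℝ)) = (√t)⁻¹ := by rw [rpow_neg ht.le, sqrt_eq_rpow]
  have hscale : √(2 * c) * √t ≤ 2 * √(a * t / 2) := by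
    refine le_of_pow_le_pow_left₀ two_ne_zero (by positivity) ?_
    rw [mul_pow, mul_pow, sq_sqrt (by linarith : (0 : ℝ) ≤ 2 * c), sq_sqrt ht.le,
      sq_sqrt (by nlinarith : (0 : ℝ) ≤ a * t / 2)]
    nlinarith
  have hK : 1 / (2 * √(a * t / 2)) ≤ (√(2 * c))⁻¹ * t ^ (-(1 / 2 : ℝ)) := by
    rw [hrpow, ← mul_inv, one_div]
    exact inv_anti₀ (by positivity) hscale
  have hN₁ : 2 / ((N : ℝ) + 1) ≤ 2 * (N : ℝ)⁻¹ := by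
    rw [div_eq_mul_inv]; gcongr; linarith
  refine (exp_smul_LbarMat_apply_le hN (hc.trans_le hca) ht x y).trans ?_
  have hu : 0 ≤ t ^ (-(1 / 2 : ℝ)) := by positivity
  have hv : 0 ≤ (√(2 * c))⁻¹ := by positivity
  calc 2 / ((N : ℝ) + 1) * (Real.exp 1 * (1 + 1 / (2 * √(a * t / 2))))
      ≤ 2 * (N : ℝ)⁻¹ * (Real.exp 1 * (1 + (√(2 * c))⁻¹ * t ^ (-(1 / 2 : ℝ)))) := by gcongr
    _ ≤ _ := by
      rw [show 2 * Real.exp 1 * (1 + (√(2 * c))⁻¹) * ((N : ℝ)⁻¹ + (N : ℝ)⁻¹ * t ^ (-(1 / 2 : ℝ)))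
          = 2 * (N : ℝ)⁻¹ * (Real.exp 1 * ((1 + (√(2 * c))⁻¹) * (1 + t ^ (-(1 / 2 : ℝ))))) by ring]
      gcongr
      nlinarith [mul_nonneg hu hv]

theorem LbarMat_apply_nonneg {N : ℕ} {a : ℝ} (ha : 0 ≤ a) {x y : Fin (N + 1)} (hxy : x ≠ y) :
    0 ≤ LbarMat N a x y := by
  have hxy' : ((x : ℕ) : ℤ) ≠ (y : ℕ) := by exact_mod_cast Fin.val_ne_of_ne hxy
  simp only [LbarMat, of_apply, LbarAct]
  split_ifs <;> first | omega | norm_num <;> positivity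

theorem nearest_neighbor_neumann_kernel_nash_bound_general
    (m : ℕ) (c C₀ : ℝ) (hm : 1 ≤ m) (hc : 0 < c) :
    ∃ C : ℝ, 0 < C ∧
      ∀ (N : ℕ) (α : ℕ → ℝ), 2 ≤ N → 2 * m ≤ N →
        (∀ k ∈ Finset.Icc 1 m, 0 ≤ α k) → c ≤ α 1 →
        (∑ k ∈ Finset.Icc 1 m, α k) ≤ C₀ →
        ∀ S T : ℝ, 0 ≤ S → S < T →
          ∀ x ∈ Finset.Icc (0 : ℤ) (N : ℤ), ∀ y ∈ Finset.Icc (0 : ℤ) (N : ℤ),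
            0 ≤ kerBar0 N (∑ k ∈ Finset.Icc 1 m, (k : ℝ) ^ 2 * α k) S T x y ∧
            kerBar0 N (∑ k ∈ Finset.Icc 1 m, (k : ℝ) ^ 2 * α k) S T x y ≤
              C * ((N : ℝ)⁻¹ + (N : ℝ)⁻¹ * (T - S) ^ (-(1 / 2 : ℝ))) := by
  refine ⟨2 * Real.exp 1 * (1 + (√(2 * c))⁻¹), by positivity, ?_⟩
  intro N α hN _ hα hα₁ _ S T _ hST x hx y hy
  have hterm : ∀ k ∈ Icc 1 m, 0 ≤ (k : ℝ) ^ 2 * α k := fun k hk =>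
    mul_nonneg (sq_nonneg _) (hα k hk)
  have hca : c ≤ ∑ k ∈ Icc 1 m, (k : ℝ) ^ 2 * α k :=
    hα₁.trans (by simpa using single_le_sum hterm (mem_Icc.2 ⟨le_rfl, hm⟩))
  obtain ⟨hx₀, hxN⟩ := mem_Icc.1 hx
  obtain ⟨hy₀, hyN⟩ := mem_Icc.1 hy
  rw [kerBar0, dif_pos ⟨hx₀, hxN, hy₀, hyN⟩]
  refine ⟨exp_apply_nonneg_of_offDiag_nonneg (fun i j hij => ?_) _ _,
    exp_smul_LbarMat_apply_le_of_le (by omega) hc hca (sub_pos.2 hST) _ _⟩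
  exact smul_nonneg (sub_nonneg.2 hST.le) (LbarMat_apply_nonneg (hc.le.trans hca) hij)

/-- The nearest-neighbor Neumann heat kernel `Ū^{N,0}` with diffusivity
`ᾱ = Σ_k k²·α̃_k` is nonnegative and bounded above by
`C·(N⁻¹ + N⁻¹(T−S)^{−1/2})` for a constant `C` depending only on `m, c, C₀`. -/
theorem nearest_neighbor_neumann_kernel_nash_bound
    (m : ℕ) (c C₀ : ℝ) (hm : 1 ≤ m) (hc : 0 < c) (hC₀ : 0 < C₀) :
    ∃ C : ℝ, 0 < C ∧
      ∀ (N : ℕ) (α : ℕ → ℝ), 2 ≤ N → 2 * m ≤ N →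
        (∀ k ∈ Finset.Icc 1 m, 0 ≤ α k) → c ≤ α 1 →
        (∑ k ∈ Finset.Icc 1 m, α k) ≤ C₀ →
        ∀ S T : ℝ, 0 ≤ S → S < T →
          ∀ x ∈ Finset.Icc (0 : ℤ) (N : ℤ), ∀ y ∈ Finset.Icc (0 : ℤ) (N : ℤ),
            0 ≤ kerBar0 N (∑ k ∈ Finset.Icc 1 m, (k : ℝ) ^ 2 * α k) S T x y ∧
            kerBar0 N (∑ k ∈ Finset.Icc 1 m, (k : ℝ) ^ 2 * α k) S T x y ≤
              C * ((N : ℝ)⁻¹ + (N : ℝ)⁻¹ * (T - S) ^ (-(1 / 2 : ℝ))) :=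
  nearest_neighbor_neumann_kernel_nash_bound_general m c C₀ hm hc
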